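/- In a finite MDP with n states, if the initial distribution d0 is not sure weakly synchronizing in T, then for every strategy σ there are at most 2^n indices i with M^σ_i(T) = 1. -/

import Mathlib

open scoped BigOperators
open Classical Filter

/-- A finite Markov decision process with real transition probabilities. -/
structure MDP (Q A : Type) [Fintype Q] [Fintype A] where
  δ : Q → A → Q → ℝ
  δ_nonneg : ∀ q a q', 0 ≤ δ q a q'
  δ_sum : ∀ q a, ∑ q', δ q a q' = 1

namespace MDP

variable {Q A : Type} [Fintype Q] [Fintype A]

/-- `d` is a probability distribution. -/
def IsDist (d : Q → ℝ) : Prop := (∀ q, 0 ≤ d q) ∧ ∑ q, d q = 1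

/-- A (randomized, history-dependent) strategy maps a history (list of past
state-action pairs) and the current state to a distribution over actions. -/
def IsStrategy (σ : List (Q × A) → Q → A → ℝ) : Prop :=
  (∀ h q a, 0 ≤ σ h q a) ∧ ∀ h q, ∑ a, σ h q a = 1

/-- The probability of the finite path `qs` (with actions `as`) of length `i`,
under strategy `σ` from initial distribution `d0`. -/
noncomputable def pathProb (M : MDP Q A) (σ : List (Q × A) → Q → A → ℝ)
    (d0 : Q → ℝ) (i : ℕ) (qs : Fin (i + 1) → Q) (as : Fin i → A) : ℝ :=
  d0 (qs 0) * ∏ j : Fin i,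
    (σ (List.ofFn (fun k : Fin j.val =>
          (qs ⟨k.val, by have := k.isLt; have := j.isLt; omega⟩,
           as ⟨k.val, by have := k.isLt; have := j.isLt; omega⟩)))
        (qs j.castSucc) (as j))
      * M.δ (qs j.castSucc) (as j) (qs j.succ)

/-- The distribution over states after `i` steps (`M^σ_i`). -/
noncomputable def stepDist (M : MDP Q A) (σ : List (Q × A) → Q → A → ℝ)
    (d0 : Q → ℝ) (i : ℕ) (q : Q) : ℝ :=
  ∑ qs : Fin (i + 1) → Q, ∑ as : Fin i → A,
    if qs (Fin.last i) = q then M.pathProb σ d0 i qs as else 0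

/-- The probability mass that a (sub)distribution assigns to a set `T`. -/
noncomputable def mass (d : Q → ℝ) (T : Set Q) : ℝ := ∑ q, T.indicator d q

/-- The support of a (sub)distribution. -/
def supp {α : Type} (d : α → ℝ) : Set α := {q | 0 < d q}

/-- One-step sure predecessors of `Y`. -/
def Pre (M : MDP Q A) (Y : Set Q) : Set Q :=
  {q | ∃ a, ∀ q', 0 < M.δ q a q' → q' ∈ Y}

/-- Probability of reaching `T` within `i` steps. -/
noncomputable def reachProb (M : MDP Q A) (σ : List (Q × A) → Q → A → ℝ)
    (d0 : Q → ℝ) (T : Set Q) (i : ℕ) : ℝ :=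
  ∑ qs : Fin (i + 1) → Q, ∑ as : Fin i → A,
    if ∃ j, qs j ∈ T then M.pathProb σ d0 i qs as else 0

/-- `d0` is almost-sure winning for the reachability objective `◇T`:
some strategy reaches `T` with probability one. -/
def ASReach (M : MDP Q A) (d0 : Q → ℝ) (T : Set Q) : Prop :=
  ∃ σ, IsStrategy σ ∧ (⨆ i : ℕ, M.reachProb σ d0 T i) = 1

/-- `d0` is limit-sure eventually synchronizing in `T`. -/
def LimitSureEventually (M : MDP Q A) (d0 : Q → ℝ) (T : Set Q) : Prop :=
  ∀ ε > (0 : ℝ), ∃ σ, IsStrategy σ ∧ ∃ i, 1 - ε ≤ mass (M.stepDist σ d0 i) T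

/-- `d0` is almost-sure weakly synchronizing in `T`. -/
def ASWeakly (M : MDP Q A) (d0 : Q → ℝ) (T : Set Q) : Prop :=
  ∃ σ, IsStrategy σ ∧ ∀ ε > (0 : ℝ), {i : ℕ | 1 - ε ≤ mass (M.stepDist σ d0 i) T}.Infinite

/-- `d0` is almost-sure strongly synchronizing in `T`. -/
def ASStrongly (M : MDP Q A) (d0 : Q → ℝ) (T : Set Q) : Prop :=
  ∃ σ, IsStrategy σ ∧ ∀ ε > (0 : ℝ), ∃ N, ∀ i ≥ N, 1 - ε ≤ mass (M.stepDist σ d0 i) T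

/-- The uniform distribution on a set `S`. -/
noncomputable def uniformOn (S : Set Q) : Q → ℝ :=
  fun q => if q ∈ S then 1 / (S.ncard : ℝ) else 0

/-- The uniform strategy, playing all actions uniformly at random. -/
noncomputable def uniformStrategy (Q A : Type) [Fintype A] :
    List (Q × A) → Q → A → ℝ :=
  fun _ _ _ => 1 / (Fintype.card A : ℝ)

/-- Action `a` is allowed in `q` w.r.t. `S` if all its successors stay in `S`. -/
def Allowed (M : MDP Q A) (S : Set Q) (q : Q) (a : A) : Prop :=
  ∀ q', 0 < M.δ q a q' → q' ∈ S

/-- Edge relation within `S` given the allowed actions. -/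
def ECEdge (M : MDP Q A) (S : Set Q) (q q' : Q) : Prop :=
  q ∈ S ∧ q' ∈ S ∧ ∃ a, M.Allowed S q a ∧ 0 < M.δ q a q'

/-- `S` is an end-component: closed and strongly connected via allowed actions. -/
def IsEC (M : MDP Q A) (S : Set Q) : Prop :=
  (∀ q ∈ S, ∃ a, M.Allowed S q a) ∧
  ∀ q ∈ S, ∀ q' ∈ S, Relation.ReflTransGen (M.ECEdge S) q q'

/-- The union of all end-components. -/
def ECUnion (M : MDP Q A) : Set Q := ⋃₀ {S | M.IsEC S}

/-- Positive always synchronizing in `T`. -/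
def PosAlways (M : MDP Q A) (d0 : Q → ℝ) (T : Set Q) : Prop :=
  ∃ σ, IsStrategy σ ∧ ∀ i, 0 < mass (M.stepDist σ d0 i) T

/-- Positive eventually synchronizing in `T`. -/
def PosEvent (M : MDP Q A) (d0 : Q → ℝ) (T : Set Q) : Prop :=
  ∃ σ, IsStrategy σ ∧ ∃ i, 0 < mass (M.stepDist σ d0 i) T

/-- Positive weakly synchronizing in `T`. -/
def PosWeakly (M : MDP Q A) (d0 : Q → ℝ) (T : Set Q) : Prop :=
  ∃ σ, IsStrategy σ ∧ ∀ N, ∃ i ≥ N, 0 < mass (M.stepDist σ d0 i) T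

/-- Positive strongly synchronizing in `T`. -/
def PosStrongly (M : MDP Q A) (d0 : Q → ℝ) (T : Set Q) : Prop :=
  ∃ σ, IsStrategy σ ∧ ∃ N, ∀ i ≥ N, 0 < mass (M.stepDist σ d0 i) T

/-- Bounded always synchronizing in `T`. -/
def BndAlways (M : MDP Q A) (d0 : Q → ℝ) (T : Set Q) : Prop :=
  ∃ σ, IsStrategy σ ∧ ∃ ε > (0 : ℝ), ∀ i, ε < mass (M.stepDist σ d0 i) T

/-- Bounded eventually synchronizing in `T`. -/
def BndEvent (M : MDP Q A) (d0 : Q → ℝ) (T : Set Q) : Prop :=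
  ∃ σ, IsStrategy σ ∧ ∃ ε > (0 : ℝ), ∃ i, ε < mass (M.stepDist σ d0 i) T

/-- Bounded weakly synchronizing in `T`. -/
def BndWeakly (M : MDP Q A) (d0 : Q → ℝ) (T : Set Q) : Prop :=
  ∃ σ, IsStrategy σ ∧ ∃ ε > (0 : ℝ), ∀ N, ∃ i ≥ N, ε < mass (M.stepDist σ d0 i) T

/-- Bounded strongly synchronizing in `T`. -/
def BndStrongly (M : MDP Q A) (d0 : Q → ℝ) (T : Set Q) : Prop :=
  ∃ σ, IsStrategy σ ∧ ∃ ε > (0 : ℝ), ∃ N, ∀ i ≥ N, ε < mass (M.stepDist σ d0 i) T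

end MDP

/-!
The support of `M^σ_i` is one of the `2^n` subsets of `Q`, so if more than `2^n` indices had
`M^σ_i(T) = 1`, two of them, `i < j`, would share a support `S ⊆ T`. Every state in the support at
time `t` has an action all of whose successors lie in the support at time `t + 1`. Playing these
actions along the supports of `σ` at the times `0, …, j - 1, i, …, j - 1, i, …` gives a strategy
whose support is contained in `S` at infinitely many times, so `d0` would be sure weakly
synchronizing.
-/

lemma Fin.sum_univ_fun_snoc {α M : Type*} [Fintype α] [AddCommMonoid M] {n : ℕ}
    (g : (Fin (n + 1) → α) → M) :
    ∑ f : Fin (n + 1) → α, g f = ∑ f : Fin n → α, ∑ x : α, g (Fin.snoc f x) := by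
  rw [← (Fin.snocEquiv fun _ => α).sum_comp, Fintype.sum_prod_type, Finset.sum_comm]
  rfl

def lassoSucc (i j x : ℕ) : ℕ := if x + 1 = j then i else x + 1

lemma iterate_lassoSucc {i j x k : ℕ} (h : x + k < j) : (lassoSucc i j)^[k] x = x + k := by
  induction k with
  | zero => rfl
  | succ k ih =>
    rw [Function.iterate_succ_apply', ih (by omega), lassoSucc, if_neg (by omega), add_assoc]

lemma isPeriodicPt_lassoSucc {i j : ℕ} (hij : i < j) :
    Function.IsPeriodicPt (lassoSucc i j) (j - i) i := by
  obtain ⟨r, rfl⟩ := Nat.exists_eq_add_of_lt hij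
  rw [Function.IsPeriodicPt, Function.IsFixedPt, show i + r + 1 - i = r + 1 by omega,
    Function.iterate_succ_apply', iterate_lassoSucc (by omega), lassoSucc, if_pos rfl]

lemma infinite_setOf_iterate_lassoSucc_eq {i j : ℕ} (hij : i < j) :
    {t | (lassoSucc i j)^[t] 0 = i}.Infinite := by
  refine Set.infinite_of_injective_forall_mem (f := fun k => k * (j - i) + i)
    (fun a b hab => Nat.eq_of_mul_eq_mul_right (Nat.sub_pos_of_lt hij) (by simpa using hab))
    fun k => ?_
  rw [Set.mem_ofPred_eq, Function.iterate_add_apply, iterate_lassoSucc (x := 0) (k := i) (by omega),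
    zero_add]
  exact ((isPeriodicPt_lassoSucc hij).const_mul k).eq

lemma Finset.exists_lt_map_eq_of_card_lt {α β : Type*} [LinearOrder α] [Fintype β] {s : Finset α}
    (f : α → β) (h : Fintype.card β < s.card) : ∃ x ∈ s, ∃ y ∈ s, x < y ∧ f x = f y := by
  obtain ⟨x, hx, y, hy, hne, hf⟩ :=
    Finset.exists_ne_map_eq_of_card_lt_of_maps_to (t := Finset.univ) h fun _ _ =>
      Finset.mem_coe.2 (Finset.mem_univ _)
  rcases hne.lt_or_gt with hxy | hyx
  exacts [⟨x, hx, y, hy, hxy, hf⟩, ⟨y, hy, x, hx, hyx, hf.symm⟩]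

namespace MDP

variable {Q A : Type}

def history {i : ℕ} (qs : Fin (i + 1) → Q) (as : Fin i → A) : List (Q × A) :=
  List.ofFn fun k => (qs k.castSucc, as k)

@[simp] lemma length_history {i : ℕ} (qs : Fin (i + 1) → Q) (as : Fin i → A) :
    (history qs as).length = i := List.length_ofFn

noncomputable def timedStrategy (g : ℕ → Q → A) : List (Q × A) → Q → A → ℝ :=
  fun h q a => if a = g h.length q then 1 else 0

lemma isStrategy_timedStrategy [Fintype A] (g : ℕ → Q → A) : IsStrategy (timedStrategy g) :=
  ⟨fun _ _ _ => by unfold timedStrategy; split_ifs <;> norm_num,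
    fun _ _ => by simp [timedStrategy]⟩

lemma IsStrategy.nonempty [Fintype A] {σ : List (Q × A) → Q → A → ℝ} (hσ : IsStrategy σ)
    (q : Q) : Nonempty A := by
  by_contra! hA
  simpa using hσ.2 [] q

variable [Fintype Q] [Fintype A] (M : MDP Q A) {σ : List (Q × A) → Q → A → ℝ} {d0 : Q → ℝ}

lemma IsDist.exists_pos {d : Q → ℝ} (hd : IsDist d) : ∃ q, 0 < d q := by
  by_contra! h
  have := Finset.sum_nonpos fun q (_ : q ∈ Finset.univ) => h q
  rw [hd.2] at this
  exact this.not_gt one_pos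

lemma mass_eq_one_iff {d : Q → ℝ} (hd : IsDist d) (T : Set Q) : mass d T = 1 ↔ supp d ⊆ T := by
  rw [mass, ← hd.2,
    Finset.sum_eq_sum_iff_of_le fun q _ => Set.indicator_le_self' (fun x _ => hd.1 x) q]
  simp only [Finset.mem_univ, true_implies, Set.indicator_apply_eq_self]
  exact forall_congr' fun q => not_imp_comm.trans (imp_congr_left (hd.1 q).lt_iff_ne'.symm)

lemma pathProb_snoc (σ : List (Q × A) → Q → A → ℝ) (d0 : Q → ℝ) {i : ℕ}
    (qs : Fin (i + 1) → Q) (as : Fin i → A) (q' : Q) (a : A) :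
    M.pathProb σ d0 (i + 1) (Fin.snoc qs q') (Fin.snoc as a) =
      M.pathProb σ d0 i qs as *
        (σ (history qs as) (qs (Fin.last i)) a * M.δ (qs (Fin.last i)) a q') := by
  have hist : ∀ (j : ℕ) (hj : j ≤ i),
      (List.ofFn fun k : Fin j => ((Fin.snoc qs q' : Fin (i + 2) → Q) ⟨k, by omega⟩,
        (Fin.snoc as a : Fin (i + 1) → A) ⟨k, by omega⟩)) =
      List.ofFn fun k : Fin j => (qs ⟨k, by omega⟩, as ⟨k, by omega⟩) := by
    intro j hj
    congr 1
    funext k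
    have : (k : ℕ) < i := by omega
    simp [Fin.snoc, this, Nat.lt_succ_of_lt this]
  simp only [pathProb, Fin.prod_univ_castSucc, history, Fin.snoc_castSucc, Fin.snoc_last,
    Fin.succ_last, Fin.succ_castSucc, mul_assoc, hist _ (Fin.is_le _)]
  rfl

lemma pathProb_zero (σ : List (Q × A) → Q → A → ℝ) (d0 : Q → ℝ) (qs : Fin 1 → Q)
    (as : Fin 0 → A) : M.pathProb σ d0 0 qs as = d0 (qs 0) := by
  simp [pathProb]

lemma pathProb_nonneg (hσ : ∀ h q a, 0 ≤ σ h q a) (hd0 : ∀ q, 0 ≤ d0 q) {i : ℕ}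
    (qs : Fin (i + 1) → Q) (as : Fin i → A) : 0 ≤ M.pathProb σ d0 i qs as :=
  mul_nonneg (hd0 _) (Finset.prod_nonneg fun _ _ => mul_nonneg (hσ _ _ _) (M.δ_nonneg _ _ _))

lemma sum_pathProb_snoc (hσ : IsStrategy σ) {i : ℕ} (qs : Fin (i + 1) → Q) (as : Fin i → A) :
    ∑ a, ∑ q', M.pathProb σ d0 (i + 1) (Fin.snoc qs q') (Fin.snoc as a) =
      M.pathProb σ d0 i qs as := by
  simp [pathProb_snoc, ← Finset.mul_sum, M.δ_sum, hσ.2]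

lemma sum_pathProb (hσ : IsStrategy σ) (hd0 : IsDist d0) (i : ℕ) :
    ∑ qs : Fin (i + 1) → Q, ∑ as : Fin i → A, M.pathProb σ d0 i qs as = 1 := by
  induction i with
  | zero =>
    simp only [pathProb_zero, Finset.univ_unique, Finset.sum_singleton]
    exact ((Equiv.funUnique (Fin 1) Q).sum_comp d0).trans hd0.2
  | succ i ih =>
    rw [Fin.sum_univ_fun_snoc, ← ih]
    refine Finset.sum_congr rfl fun qs _ => ?_
    rw [Finset.sum_comm, Fin.sum_univ_fun_snoc]
    exact Finset.sum_congr rfl fun as _ => M.sum_pathProb_snoc hσ qs as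

lemma sum_stepDist_eq_sum_pathProb (σ : List (Q × A) → Q → A → ℝ) (d0 : Q → ℝ) (i : ℕ) :
    ∑ q, M.stepDist σ d0 i q =
      ∑ qs : Fin (i + 1) → Q, ∑ as : Fin i → A, M.pathProb σ d0 i qs as := by
  unfold stepDist
  rw [Finset.sum_comm]
  refine Finset.sum_congr rfl fun qs _ => ?_
  rw [Finset.sum_comm]
  simp

lemma stepDist_nonneg (hσ : ∀ h q a, 0 ≤ σ h q a) (hd0 : ∀ q, 0 ≤ d0 q) (i : ℕ) (q : Q) :
    0 ≤ M.stepDist σ d0 i q :=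
  Finset.sum_nonneg fun qs _ => Finset.sum_nonneg fun as _ => by
    split_ifs
    exacts [M.pathProb_nonneg hσ hd0 qs as, le_rfl]

lemma isDist_stepDist (hσ : IsStrategy σ) (hd0 : IsDist d0) (i : ℕ) :
    IsDist (M.stepDist σ d0 i) :=
  ⟨M.stepDist_nonneg hσ.1 hd0.1 i,
    (M.sum_stepDist_eq_sum_pathProb σ d0 i).trans (M.sum_pathProb hσ hd0 i)⟩

lemma stepDist_zero (σ : List (Q × A) → Q → A → ℝ) (d0 : Q → ℝ) : M.stepDist σ d0 0 = d0 := by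
  funext q
  simp only [stepDist, pathProb_zero, Finset.univ_unique, Finset.sum_singleton]
  exact ((Equiv.funUnique (Fin 1) Q).sum_comp fun x => if x = q then d0 x else 0).trans (by simp)

lemma pathProb_le_stepDist (hσ : ∀ h q a, 0 ≤ σ h q a) (hd0 : ∀ q, 0 ≤ d0 q) {i : ℕ}
    (qs : Fin (i + 1) → Q) (as : Fin i → A) :
    M.pathProb σ d0 i qs as ≤ M.stepDist σ d0 i (qs (Fin.last i)) := by
  have hnn : ∀ qs' as', 0 ≤ if qs' (Fin.last i) = qs (Fin.last i)
      then M.pathProb σ d0 i qs' as' else 0 := fun qs' as' => by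
    split_ifs
    exacts [M.pathProb_nonneg hσ hd0 qs' as', le_rfl]
  calc M.pathProb σ d0 i qs as
      = if qs (Fin.last i) = qs (Fin.last i) then M.pathProb σ d0 i qs as else 0 := by simp
    _ ≤ ∑ as', if qs (Fin.last i) = qs (Fin.last i) then M.pathProb σ d0 i qs as' else 0 :=
      Finset.single_le_sum (fun as' _ => hnn qs as') (Finset.mem_univ as)
    _ ≤ M.stepDist σ d0 i (qs (Fin.last i)) :=
      Finset.single_le_sum (f := fun qs' => ∑ as', _)
        (fun qs' _ => Finset.sum_nonneg fun as' _ => hnn qs' as') (Finset.mem_univ qs)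

lemma exists_path_of_stepDist_pos {i : ℕ} {q : Q} (h : 0 < M.stepDist σ d0 i q) :
    ∃ qs : Fin (i + 1) → Q, ∃ as : Fin i → A,
      qs (Fin.last i) = q ∧ 0 < M.pathProb σ d0 i qs as := by
  by_contra! hc
  refine h.not_ge (Finset.sum_nonpos fun qs _ => Finset.sum_nonpos fun as _ => ?_)
  split_ifs with hlast
  exacts [hc qs as hlast, le_rfl]

lemma pre_mono : Monotone M.Pre := fun _ _ hYZ _ ⟨a, ha⟩ => ⟨a, fun q' hq' => hYZ (ha q' hq')⟩

lemma supp_stepDist_subset_pre (hσ : IsStrategy σ) (hd0 : ∀ q, 0 ≤ d0 q) (i : ℕ) :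
    supp (M.stepDist σ d0 i) ⊆ M.Pre (supp (M.stepDist σ d0 (i + 1))) := by
  intro q hq
  obtain ⟨qs, as, rfl, hpath⟩ := M.exists_path_of_stepDist_pos hq
  obtain ⟨a, ha⟩ : ∃ a, 0 < σ (history qs as) (qs (Fin.last i)) a := by
    by_contra! hc
    have := Finset.sum_nonpos fun a (_ : a ∈ Finset.univ) => hc a
    rw [hσ.2] at this
    exact this.not_gt one_pos
  refine ⟨a, fun q' hq' => ?_⟩
  have hext := M.pathProb_le_stepDist hσ.1 hd0 (Fin.snoc qs q') (Fin.snoc as a)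
  rw [Fin.snoc_last, pathProb_snoc] at hext
  exact (mul_pos hpath (mul_pos ha hq')).trans_le hext

lemma exists_of_mem_supp_stepDist_succ (hσ : ∀ h q a, 0 ≤ σ h q a) (hd0 : ∀ q, 0 ≤ d0 q)
    {i : ℕ} {q' : Q} (hq' : q' ∈ supp (M.stepDist σ d0 (i + 1))) :
    ∃ q ∈ supp (M.stepDist σ d0 i), ∃ a, ∃ h : List (Q × A), h.length = i ∧
      0 < σ h q a ∧ 0 < M.δ q a q' := by
  obtain ⟨qs, as, rfl, hpath⟩ := M.exists_path_of_stepDist_pos hq'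
  rw [← Fin.snoc_init_self qs, ← Fin.snoc_init_self as, pathProb_snoc] at hpath
  have hprefix := M.pathProb_nonneg hσ hd0 (Fin.init qs) (Fin.init as)
  have hσδ := pos_of_mul_pos_right hpath hprefix
  have hδ := pos_of_mul_pos_right hσδ (hσ _ _ _)
  refine ⟨_, ?_, _, _, length_history _ _, pos_of_mul_pos_left hσδ (M.δ_nonneg _ _ _), hδ⟩
  exact (pos_of_mul_pos_left hpath (mul_nonneg (hσ _ _ _) (M.δ_nonneg _ _ _))).trans_le
    (M.pathProb_le_stepDist hσ hd0 _ _)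

lemma exists_strategy_supp_stepDist_subset [Nonempty A] (Y : ℕ → Set Q)
    (hd0 : ∀ q, 0 ≤ d0 q) (h0 : supp d0 ⊆ Y 0) (hY : ∀ t, Y t ⊆ M.Pre (Y (t + 1))) :
    ∃ σ, IsStrategy σ ∧ ∀ t, supp (M.stepDist σ d0 t) ⊆ Y t := by
  have : ∀ t q, ∃ a, q ∈ Y t → ∀ q', 0 < M.δ q a q' → q' ∈ Y (t + 1) := fun t q => by
    by_cases hq : q ∈ Y t
    · obtain ⟨a, ha⟩ := hY t hq
      exact ⟨a, fun _ => ha⟩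
    · exact ⟨Classical.arbitrary A, fun h => (hq h).elim⟩
  choose g hg using this
  have hσ := isStrategy_timedStrategy g
  refine ⟨timedStrategy g, hσ, fun t => ?_⟩
  induction t with
  | zero => rwa [stepDist_zero]
  | succ t ih =>
    intro q' hq'
    obtain ⟨q, hq, a, h, rfl, ha, hδ⟩ := M.exists_of_mem_supp_stepDist_succ hσ.1 hd0 hq'
    obtain rfl : a = g h.length q := by
      by_contra hne
      simp [timedStrategy, hne] at ha
    exact hg _ q (ih hq) q' hδ

lemma exists_strategy_infinite_of_supp_stepDist_subset (hσ : IsStrategy σ) (hd0 : IsDist d0)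
    {T : Set Q} {i j : ℕ} (hij : i < j) (hiT : supp (M.stepDist σ d0 i) ⊆ T)
    (hji : supp (M.stepDist σ d0 j) ⊆ supp (M.stepDist σ d0 i)) :
    ∃ σ', IsStrategy σ' ∧ {t | mass (M.stepDist σ' d0 t) T = 1}.Infinite := by
  obtain ⟨q, -⟩ := hd0.exists_pos
  have := hσ.nonempty q
  let S := fun x => supp (M.stepDist σ d0 x)
  have hS : ∀ x, S x ⊆ M.Pre (S (lassoSucc i j x)) := fun x => by
    unfold lassoSucc
    split_ifs with hx
    · exact (M.supp_stepDist_subset_pre hσ hd0.1 x).trans (M.pre_mono (hx ▸ hji))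
    · exact M.supp_stepDist_subset_pre hσ hd0.1 x
  obtain ⟨σ', hσ', hσ'S⟩ :=
    M.exists_strategy_supp_stepDist_subset (fun t => S ((lassoSucc i j)^[t] 0)) hd0.1
      (by simp [S, stepDist_zero]) fun t => by
        simpa only [Function.iterate_succ_apply'] using hS _
  refine ⟨σ', hσ', (infinite_setOf_iterate_lassoSucc_eq hij).mono fun t ht => ?_⟩
  rw [Set.mem_ofPred_eq, mass_eq_one_iff (M.isDist_stepDist hσ' hd0 t)]
  exact (hσ'S t).trans (by rwa [show (lassoSucc i j)^[t] 0 = i from ht])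

end MDP

open MDP in
/-- If `d0` is not sure weakly synchronizing in `T`, then for every strategy
there are at most `2^n` indices `i` with `M^σ_i(T) = 1`. -/
theorem stmt4 {Q A : Type} [Fintype Q] [Fintype A] (M : MDP Q A)
    (d0 : Q → ℝ) (hd0 : IsDist d0) (T : Set Q)
    (h : ¬ ∃ σ, IsStrategy σ ∧ {i : ℕ | mass (M.stepDist σ d0 i) T = 1}.Infinite) :
    ∀ σ, IsStrategy σ → ∃ s : Finset ℕ, s.card ≤ 2 ^ Fintype.card Q ∧
      ∀ i : ℕ, mass (M.stepDist σ d0 i) T = 1 → i ∈ s := by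
  intro σ hσ
  have hfin : {i | mass (M.stepDist σ d0 i) T = 1}.Finite :=
    Set.not_infinite.1 fun hinf => h ⟨σ, hσ, hinf⟩
  refine ⟨hfin.toFinset, ?_, fun i hi => hfin.mem_toFinset.2 hi⟩
  by_contra! hcard
  rw [← Fintype.card_set] at hcard
  obtain ⟨i, hi, j, -, hij, hsupp⟩ :=
    hfin.toFinset.exists_lt_map_eq_of_card_lt (fun t => supp (M.stepDist σ d0 t)) hcard
  rw [Set.Finite.mem_toFinset, Set.mem_ofPred_eq, mass_eq_one_iff (M.isDist_stepDist hσ hd0 i)]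
    at hi
  exact h (M.exists_strategy_infinite_of_supp_stepDist_subset hσ hd0 hij hi hsupp.ge)
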